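/- arXiv:1404.6432 — 3 statements merged into one kernel-verified Lean document; each statement's English description precedes it below -/
import Mathlib

section
/- Let (a_ℓ)_{ℓ≥0} be a sequence of real numbers with a₀ = 1 and a_{ℓ+1} = a₁·a_ℓ − a_{ℓ−1} for all ℓ ≥ 1. Let 0 < x < 1 be a real number such that Σ_{ℓ≥0} a_ℓ²·x^ℓ converges. Then Σ_{ℓ≥0} a_ℓ·a_{ℓ+1}·x^ℓ converges absolutely and (1 + x) · Σ_{ℓ≥0} a_ℓ·a_{ℓ+1}·x^ℓ = a₁ · Σ_{ℓ≥0} a_ℓ²·x^ℓ. -/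
/-!
Put `f ℓ = aₗ aₗ₊₁ xˡ` and `g ℓ = aₗ² xˡ`. The recurrence gives
`a₁ g (ℓ+1) - f (ℓ+1) = aₗ₊₁ (a₁ aₗ₊₁ - aₗ₊₂) xˡ⁺¹ = x f ℓ`, while `a₁ g 0 - f 0 = 0`, so summing
`a₁ g - f` over `ℓ ≥ 0` gives `a₁ Σ g - Σ f = x Σ f`. Absolute convergence of `Σ f` comes from
`2 |aₗ aₗ₊₁| ≤ aₗ² + aₗ₊₁²`.
-/

lemma summable_abs_mul_succ_mul_pow {b : ℕ → ℝ} {x : ℝ} (hx : 0 < x)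
    (h : Summable fun n => b n ^ 2 * x ^ n) :
    Summable fun n => |b n * b (n + 1) * x ^ n| := by
  have hsucc : Summable fun n => b (n + 1) ^ 2 * x ^ n := by
    refine (((summable_nat_add_iff 1).2 h).mul_left x⁻¹).congr fun n => ?_
    field_simp
    ring
  refine .of_nonneg_of_le (fun _ => abs_nonneg _) (fun n => ?_) ((h.add hsucc).div_const 2)
  have hxn : 0 ≤ x ^ n := pow_nonneg hx.le n
  have hamgm := mul_le_mul_of_nonneg_right (two_mul_le_add_sq |b n| |b (n + 1)|) hxn
  rw [sq_abs, sq_abs] at hamgm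
  rw [abs_mul, abs_mul, abs_of_nonneg hxn]
  linarith

lemma tsum_eq_mul_tsum_of_succ {R : Type*} [DivisionRing R] [TopologicalSpace R]
    [IsTopologicalRing R] [T2Space R] {h f : ℕ → R} {c : R} (hh : Summable h) (h0 : h 0 = 0)
    (hsucc : ∀ n, h (n + 1) = c * f n) : ∑' n, h n = c * ∑' n, f n := by
  rw [hh.tsum_eq_zero_add, h0, zero_add, tsum_congr hsucc, tsum_mul_left]

theorem stmt_4_general (a : ℕ → ℝ) (h0 : a 0 = 1)
    (hrec : ∀ ℓ : ℕ, 1 ≤ ℓ → a (ℓ+1) = a 1 * a ℓ - a (ℓ-1))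
    (x : ℝ) (hx0 : 0 < x)
    (hsum : Summable (fun ℓ : ℕ => (a ℓ)^2 * x^ℓ)) :
    Summable (fun ℓ : ℕ => |a ℓ * a (ℓ+1) * x^ℓ|)
      ∧ (1 + x) * (∑' ℓ : ℕ, a ℓ * a (ℓ+1) * x^ℓ)
          = a 1 * (∑' ℓ : ℕ, (a ℓ)^2 * x^ℓ) := by
  have habs := summable_abs_mul_succ_mul_pow hx0 hsum
  refine ⟨habs, ?_⟩
  have hshift (ℓ : ℕ) : a 1 * (a (ℓ + 1) ^ 2 * x ^ (ℓ + 1)) - a (ℓ + 1) * a (ℓ + 1 + 1) * x ^ (ℓ + 1)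
      = x * (a ℓ * a (ℓ + 1) * x ^ ℓ) := by
    rw [hrec (ℓ + 1) (Nat.le_add_left 1 ℓ), Nat.add_sub_cancel]
    ring
  have htel := tsum_eq_mul_tsum_of_succ ((hsum.mul_left (a 1)).sub habs.of_abs)
    (by simp [h0]) hshift
  rw [(hsum.mul_left (a 1)).tsum_sub habs.of_abs, tsum_mul_left] at htel
  linarith

/-- Hecke-recurrence identity: `(1+x) Σ aₗ aₗ₊₁ xˡ = a₁ Σ aₗ² xˡ`. -/
theorem stmt_4 (a : ℕ → ℝ) (h0 : a 0 = 1)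
    (hrec : ∀ ℓ : ℕ, 1 ≤ ℓ → a (ℓ+1) = a 1 * a ℓ - a (ℓ-1))
    (x : ℝ) (hx0 : 0 < x) (hx1 : x < 1)
    (hsum : Summable (fun ℓ : ℕ => (a ℓ)^2 * x^ℓ)) :
    Summable (fun ℓ : ℕ => |a ℓ * a (ℓ+1) * x^ℓ|)
      ∧ (1 + x) * (∑' ℓ : ℕ, a ℓ * a (ℓ+1) * x^ℓ)
          = a 1 * (∑' ℓ : ℕ, (a ℓ)^2 * x^ℓ) :=
  stmt_4_general a h0 hrec x hx0 hsum
end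

section
/- Let 0 < r₁ < r₂ be real numbers and let ρ > r₁ + r₂. Let a, b, x ∈ ℂ, let H be analytic on the disc {s ∈ ℂ : |s| < ρ}, and define F(s) = (a/2)/s + b/2 + s·H(s) for 0 < |s| < ρ. Then −(1/(2πi))² · ∮_{|z₁|=r₁} ∮_{|z₂|=r₂} F(z₁ − z₂) · ((z₂ − z₁)²/(z₁²·z₂²)) · e^{(x/2)(z₁ − z₂)} dz₂ dz₁ = (a/2)·x + b. -/
/-!
Since `(z₂ - z₁)²` cancels the simple pole of `F` at `z₁ = z₂`, the integrand is
`G (z₁ - z₂) / (z₁² z₂²)` with `G s = ((a/2) s + (b/2) s² + s³ H s) e^{x s / 2}`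
holomorphic on the disc of radius `ρ`. Cauchy's formula for the double pole at `z₂ = 0`
turns the inner integral into `-2πi G'(z₁) / z₁²`, and once more at `z₁ = 0` the double
integral into `-(2πi)² G''(0)`. Reading `G''(0) = b + a x / 2` off the Taylor expansion
of `G` at `0` finishes the proof.
-/

open Complex Metric

theorem circleIntegral_div_sq {R : ℝ} (hR : 0 < R) {f : ℂ → ℂ}
    (hf : DifferentiableOn ℂ f (closedBall 0 R)) :
    (∮ z in C(0, R), f z / z ^ 2) = 2 * Real.pi * I * deriv f 0 := by
  simpa [div_eq_inv_mul] using hf.deriv_eq_smul_circleIntegral hR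

theorem circleIntegral_comp_const_sub_div_sq {R : ℝ} (hR : 0 < R) {w : ℂ} {G : ℂ → ℂ}
    (hG : DifferentiableOn ℂ G (closedBall w R)) :
    (∮ z in C(0, R), G (w - z) / z ^ 2) = -(2 * Real.pi * I * deriv G w) := by
  have hf : DifferentiableOn ℂ (fun z => G (w - z)) (closedBall 0 R) :=
    hG.comp (by fun_prop) fun z hz => by simpa [dist_eq_norm, norm_sub_rev] using hz
  simpa [deriv_comp_const_sub] using circleIntegral_div_sq hR hf

section

variable {𝕜 : Type*} [NontriviallyNormedField 𝕜]

theorem iteratedDeriv_pow_mul_eq_zero {h : 𝕜 → 𝕜} {k m : ℕ} (hkm : k < m)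
    (hh : ContDiffAt 𝕜 k h 0) :
    iteratedDeriv k (fun s => s ^ m * h s) 0 = 0 := by
  rw [iteratedDeriv_fun_mul (by fun_prop) hh]
  refine Finset.sum_eq_zero fun i hi => ?_
  have : m - i ≠ 0 := by simp at hi; omega
  simp [this]

theorem iteratedDeriv_add_pow_mul_eq {p h : 𝕜 → 𝕜} {k m : ℕ} (hkm : k < m)
    (hp : ContDiffAt 𝕜 k p 0) (hh : ContDiffAt 𝕜 k h 0) :
    iteratedDeriv k (fun s => p s + s ^ m * h s) 0 = iteratedDeriv k p 0 := by
  rw [iteratedDeriv_fun_add hp (by fun_prop), iteratedDeriv_pow_mul_eq_zero hkm hh, add_zero]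

end

theorem iteratedDeriv_two_mul_cexp_of_taylor (c₁ c₂ t : ℂ) {h : ℂ → ℂ}
    (hh : ContDiffAt ℂ 2 h 0) :
    iteratedDeriv 2 (fun s => (c₁ * s + c₂ * s ^ 2 + s ^ 3 * h s) * exp (t * s)) 0
      = 2 * c₂ + 2 * c₁ * t := by
  have hp₁ : deriv (fun s : ℂ => c₁ * s + c₂ * s ^ 2) = fun s => c₁ + c₂ * (2 * s) :=
    funext fun s => by
      simpa using (((hasDerivAt_id' s).const_mul c₁).fun_add
        ((hasDerivAt_pow 2 s).const_mul c₂)).deriv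
  have hp₂ : deriv (fun s : ℂ => c₁ + c₂ * (2 * s)) 0 = 2 * c₂ := by
    simp [mul_comm]
  rw [iteratedDeriv_fun_mul (by fun_prop) (by fun_prop)]
  simp only [Finset.sum_range_succ, Finset.sum_range_zero, iteratedDeriv_cexp_const_mul]
  rw [iteratedDeriv_add_pow_mul_eq (by norm_num) (by fun_prop) hh,
    iteratedDeriv_add_pow_mul_eq (by norm_num) (by fun_prop) (hh.of_le (by norm_num)),
    iteratedDeriv_add_pow_mul_eq (by norm_num) (by fun_prop) (hh.of_le (by norm_num))]
  simp only [iteratedDeriv_succ, iteratedDeriv_zero, hp₁, hp₂]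
  norm_num
  ring

theorem circleIntegral_circleIntegral_comp_sub_div_sq_mul_sq {r₁ r₂ ρ : ℝ} (hr₁ : 0 < r₁)
    (hr₂ : 0 < r₂) (hρ : r₁ + r₂ < ρ) {G : ℂ → ℂ}
    (hG : DifferentiableOn ℂ G (ball 0 ρ)) :
    (∮ z₁ in C(0, r₁), ∮ z₂ in C(0, r₂), G (z₁ - z₂) / (z₁ ^ 2 * z₂ ^ 2))
      = -(2 * Real.pi * I) ^ 2 * iteratedDeriv 2 G 0 := by
  have inner : ∀ z₁ ∈ sphere (0 : ℂ) r₁,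
      (∮ z₂ in C(0, r₂), G (z₁ - z₂) / (z₁ ^ 2 * z₂ ^ 2))
        = -(2 * Real.pi * I) * (deriv G z₁ / z₁ ^ 2) := by
    intro z₁ hz₁
    have hsub : closedBall z₁ r₂ ⊆ ball 0 ρ :=
      closedBall_subset_ball' (by rw [mem_sphere] at hz₁; linarith)
    calc (∮ z₂ in C(0, r₂), G (z₁ - z₂) / (z₁ ^ 2 * z₂ ^ 2))
        = ∮ z₂ in C(0, r₂), (z₁ ^ 2)⁻¹ * (G (z₁ - z₂) / z₂ ^ 2) := by
          congr 1; ext z₂; ring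
      _ = -(2 * Real.pi * I) * (deriv G z₁ / z₁ ^ 2) := by
          rw [circleIntegral.integral_const_mul,
            circleIntegral_comp_const_sub_div_sq hr₂ (hG.mono hsub)]
          ring
  have hG' : DifferentiableOn ℂ (deriv G) (closedBall 0 r₁) :=
    (hG.deriv isOpen_ball).mono (closedBall_subset_ball (by linarith))
  rw [circleIntegral.integral_congr hr₁.le inner, circleIntegral.integral_const_mul,
    circleIntegral_div_sq hr₁ hG', iteratedDeriv_succ', iteratedDeriv_one]
  ring

/-- The double contour integral computing the polynomial `P₁` of the CFKRS
moment conjecture for degree-two `L`-functions. -/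
theorem stmt_12 (r₁ r₂ ρ : ℝ) (hr₁ : 0 < r₁) (hr₁₂ : r₁ < r₂) (hρ : r₁ + r₂ < ρ)
    (a b x : ℂ) (H : ℂ → ℂ) (hH : DifferentiableOn ℂ H (Metric.ball 0 ρ))
    (F : ℂ → ℂ)
    (hF : ∀ s : ℂ, 0 < ‖s‖ → ‖s‖ < ρ →
      F s = (a/2)/s + b/2 + s * H s) :
    -(1/(2*Real.pi*I))^2 *
        (∮ z₁ in C(0, r₁), ∮ z₂ in C(0, r₂),
          F (z₁ - z₂) * ((z₂ - z₁)^2/(z₁^2 * z₂^2)) * Complex.exp ((x/2)*(z₁ - z₂)))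
      = (a/2) * x + b := by
  set G : ℂ → ℂ := fun s => ((a/2) * s + (b/2) * s^2 + s^3 * H s) * exp ((x/2) * s)
  have hr₂ : 0 < r₂ := hr₁.trans hr₁₂
  have hG : DifferentiableOn ℂ G (ball 0 ρ) := by fun_prop
  have hH₀ : ContDiffAt ℂ 2 H 0 :=
    (hH.analyticOnNhd isOpen_ball 0 (mem_ball_self (by linarith))).contDiffAt
  have hintegrand : ∀ z₁ ∈ sphere (0 : ℂ) r₁, ∀ z₂ ∈ sphere (0 : ℂ) r₂,
      F (z₁ - z₂) * ((z₂ - z₁)^2/(z₁^2 * z₂^2)) * exp ((x/2)*(z₁ - z₂))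
        = G (z₁ - z₂) / (z₁ ^ 2 * z₂ ^ 2) := by
    intro z₁ hz₁ z₂ hz₂
    rw [mem_sphere_zero_iff_norm] at hz₁ hz₂
    have hlow : r₂ - r₁ ≤ ‖z₁ - z₂‖ := by
      simpa [hz₁, hz₂, norm_sub_rev] using norm_sub_norm_le z₂ z₁
    have hup : ‖z₁ - z₂‖ < ρ := (norm_sub_le _ _).trans_lt (by linarith)
    have hne : z₁ - z₂ ≠ 0 := norm_pos_iff.mp (by linarith)
    rw [hF _ (by linarith) hup]
    simp only [G]
    field_simp
    ring
  rw [circleIntegral.integral_congr hr₁.le fun z₁ hz₁ =>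
      circleIntegral.integral_congr hr₂.le (hintegrand z₁ hz₁),
    circleIntegral_circleIntegral_comp_sub_div_sq_mul_sq hr₁ hr₂ hρ hG,
    iteratedDeriv_two_mul_cexp_of_taylor _ _ _ hH₀]
  field_simp
  ring
end

section
/- For every real δ > 0 there exists a constant C > 0 such that for all positive integers a and b and every real X ≥ 2, the sum over all pairs (m, n) of positive integers with a·m = b·n and m·n ≤ X of τ(m)·τ(n)/√(m·n) is at most C·(a·b·X)^δ / √(a′·b′), where a′ = a/gcd(a,b) and b′ = b/gcd(a,b). -/
/-!
Every solution of `a * m = b * n` is `(m, n) = (b' * k, a' * k)`, so `√(m n) = √(a' b') k`.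
With the divisor bound `τ(l) ≤ C l ^ (δ / 4)` and `l ≤ a b X`, the numerators are at most
`C² (a b X) ^ (δ / 2)`, and the remaining sum `∑_{k ≤ X} 1 / k ≤ 1 + log X` costs another
`(a b X) ^ (δ / 2)`.
-/

open Real Finset

lemma add_one_le_mul_two_rpow {ε : ℝ} (hε : 0 < ε) (e : ℕ) :
    (e + 1 : ℝ) ≤ (1 + 1 / (ε * log 2)) * 2 ^ (e * ε) := by
  have ht : 0 < ε * log 2 := mul_pos hε (log_pos one_lt_two)
  have hexp : 1 + e * (ε * log 2) ≤ (2 : ℝ) ^ (e * ε) := by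
    rw [rpow_def_of_pos two_pos]
    linarith [add_one_le_exp (log 2 * (e * ε))]
  have hexpand : (1 + 1 / (ε * log 2)) * (1 + e * (ε * log 2))
      = e + 1 + (e * (ε * log 2) + 1 / (ε * log 2)) := by
    field_simp
    ring
  calc (e + 1 : ℝ) ≤ (1 + 1 / (ε * log 2)) * (1 + e * (ε * log 2)) := by
        rw [hexpand]
        have : 0 ≤ e * (ε * log 2) + 1 / (ε * log 2) := by positivity
        linarith
    _ ≤ _ := by gcongr

lemma add_one_le_pow_of_two_le {y : ℝ} (hy : 2 ≤ y) (e : ℕ) : (e + 1 : ℝ) ≤ y ^ e :=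
  calc (e + 1 : ℝ) = 1 + e * 1 := by ring
    _ ≤ (1 + 1) ^ e := one_add_mul_le_pow (by norm_num) e
    _ ≤ y ^ e := by gcongr; linarith

lemma add_one_le_ite_mul_rpow {ε : ℝ} (hε : 0 < ε) {p : ℕ} (hp : 2 ≤ p) (e : ℕ) :
    (e + 1 : ℝ) ≤
      (if p < ⌈(2 : ℝ) ^ (1 / ε)⌉₊ then 1 + 1 / (ε * log 2) else 1) * (p : ℝ) ^ (e * ε) := by
  have hp2 : (2 : ℝ) ≤ p := mod_cast hp
  split_ifs with hpN
  · calc _ ≤ (1 + 1 / (ε * log 2)) * 2 ^ (e * ε) := add_one_le_mul_two_rpow hε e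
      _ ≤ _ := by gcongr
  · have hpε : 2 ≤ (p : ℝ) ^ ε :=
      calc (2 : ℝ) = ((2 : ℝ) ^ (1 / ε)) ^ ε := by
            rw [← rpow_mul zero_le_two, one_div_mul_cancel hε.ne', rpow_one]
        _ ≤ (p : ℝ) ^ ε := by
            gcongr
            exact (Nat.le_ceil _).trans (mod_cast not_lt.mp hpN)
    rw [one_mul, mul_comm, rpow_mul (by positivity), rpow_natCast]
    exact add_one_le_pow_of_two_le hpε e

lemma exists_card_divisors_le_mul_rpow {ε : ℝ} (hε : 0 < ε) :
    ∃ C > (0 : ℝ), ∀ n : ℕ, (#n.divisors : ℝ) ≤ C * (n : ℝ) ^ ε := by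
  set E := 1 + 1 / (ε * log 2)
  set N := ⌈(2 : ℝ) ^ (1 / ε)⌉₊
  have hE : 1 ≤ E := le_add_of_nonneg_right (by positivity [log_pos one_lt_two])
  refine ⟨E ^ N, by positivity, fun n => ?_⟩
  rcases eq_or_ne n 0 with rfl | hn
  · simp [zero_rpow hε.ne']
  set c : ℕ → ℝ := fun p => if p < N then E else 1
  have hlocal : ∀ p ∈ n.primeFactors,
      (n.factorization p + 1 : ℝ) ≤ c p * ((p : ℝ) ^ n.factorization p) ^ ε := by
    intro p hp
    rw [← rpow_natCast, ← rpow_mul (by positivity)]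
    exact add_one_le_ite_mul_rpow hε (Nat.prime_of_mem_primeFactors hp).two_le _
  -- Only the primes below `N` lose a factor, and there are at most `N` of them.
  have hsmall : ∏ p ∈ n.primeFactors, c p ≤ E ^ N := by
    rw [prod_ite, prod_const, prod_const, one_pow, mul_one]
    refine pow_le_pow_right₀ hE ((card_le_card fun p hp => ?_).trans (card_range N).le)
    exact mem_range.mpr (mem_filter.mp hp).2
  have hnε : (n : ℝ) ^ ε = ∏ p ∈ n.primeFactors, ((p : ℝ) ^ n.factorization p) ^ ε := by
    rw [finsetProd_rpow _ _ (fun p _ => by positivity)]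
    congr 1
    exact_mod_cast Nat.prod_primeFactors_pow_factorization hn
  calc (#n.divisors : ℝ) = ∏ p ∈ n.primeFactors, (n.factorization p + 1 : ℝ) := by
        rw [Nat.card_divisors hn]; push_cast; rfl
    _ ≤ ∏ p ∈ n.primeFactors, c p * ((p : ℝ) ^ n.factorization p) ^ ε :=
        prod_le_prod (fun p _ => by positivity) hlocal
    _ = (∏ p ∈ n.primeFactors, c p) * (n : ℝ) ^ ε := by rw [prod_mul_distrib, hnε]
    _ ≤ E ^ N * (n : ℝ) ^ ε := by gcongr

lemma div_gcd_pos_of_ne_zero_right {a b : ℕ} (hb : b ≠ 0) : 0 < b / a.gcd b :=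
  Nat.div_pos (Nat.gcd_le_right _ (Nat.pos_of_ne_zero hb))
    (Nat.gcd_pos_of_pos_right _ (Nat.pos_of_ne_zero hb))

lemma exists_eq_mul_div_gcd_of_mul_eq_mul {a b m n : ℕ} (hb : b ≠ 0) (h : a * m = b * n) :
    ∃ k, m = b / a.gcd b * k ∧ n = a / a.gcd b * k := by
  have hg : 0 < a.gcd b := Nat.gcd_pos_of_pos_right _ (Nat.pos_of_ne_zero hb)
  have h' : a / a.gcd b * m = b / a.gcd b * n := by
    refine Nat.eq_of_mul_eq_mul_left hg ?_
    rw [← mul_assoc, ← mul_assoc, Nat.mul_div_cancel' (Nat.gcd_dvd_left a b),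
      Nat.mul_div_cancel' (Nat.gcd_dvd_right a b), h]
  obtain ⟨k, rfl⟩ : b / a.gcd b ∣ m :=
    (Nat.coprime_div_gcd_div_gcd hg).symm.dvd_of_dvd_mul_left ⟨n, h'⟩
  refine ⟨k, rfl, Nat.eq_of_mul_eq_mul_left (div_gcd_pos_of_ne_zero_right (a := a) hb) ?_⟩
  rw [← h']
  ring

lemma sum_le_sum_mul_div_gcd {a b N : ℕ} (hb : b ≠ 0) {s : Finset (ℕ × ℕ)}
    (hs : ∀ p ∈ s, a * p.1 = b * p.2 ∧ 0 < p.1 ∧ p.1 ≤ N) {f : ℕ × ℕ → ℝ} (hf : 0 ≤ f) :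
    ∑ p ∈ s, f p ≤ ∑ k ∈ Icc 1 N, f (b / a.gcd b * k, a / a.gcd b * k) := by
  have hb' : 0 < b / a.gcd b := div_gcd_pos_of_ne_zero_right hb
  have hinj : Set.InjOn (fun k => (b / a.gcd b * k, a / a.gcd b * k)) (Icc 1 N : Set ℕ) :=
    fun k _ l _ hkl => Nat.eq_of_mul_eq_mul_left hb' (congrArg Prod.fst hkl)
  rw [← sum_image hinj]
  refine sum_le_sum_of_subset_of_nonneg (fun p hp => ?_) (fun p _ _ => hf p)
  obtain ⟨hab, hpos, hle⟩ := hs p hp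
  obtain ⟨k, hm, hn⟩ := exists_eq_mul_div_gcd_of_mul_eq_mul hb hab
  refine mem_image.mpr ⟨k, mem_Icc.mpr ⟨?_, ?_⟩, Prod.ext hm.symm hn.symm⟩
  · rw [hm] at hpos; exact Nat.pos_of_mul_pos_left hpos
  · rw [hm] at hle; exact (Nat.le_mul_of_pos_left k hb').trans hle

lemma card_divisors_mul_card_divisors_div_sqrt_le {C ε Y : ℝ} (hC : 0 ≤ C) (hε : 0 ≤ ε)
    (hτ : ∀ n : ℕ, (#n.divisors : ℝ) ≤ C * (n : ℝ) ^ ε) {m n k : ℕ}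
    (hm : ((m * k : ℕ) : ℝ) ≤ Y) (hn : ((n * k : ℕ) : ℝ) ≤ Y) :
    (#(m * k).divisors : ℝ) * #(n * k).divisors / √(((m * k : ℕ) : ℝ) * ((n * k : ℕ) : ℝ))
      ≤ (C * Y ^ ε) ^ 2 / √(m * n) / k := by
  have hτY : ∀ l : ℕ, (l : ℝ) ≤ Y → (#l.divisors : ℝ) ≤ C * Y ^ ε :=
    fun l hl => (hτ l).trans (by gcongr)
  have hsqrt : √(((m * k : ℕ) : ℝ) * ((n * k : ℕ) : ℝ)) = √(m * n) * k := by
    rw [show ((m * k : ℕ) : ℝ) * ((n * k : ℕ) : ℝ) = (m * n) * (k : ℝ) ^ 2 by push_cast; ring,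
      sqrt_mul (by positivity), sqrt_sq (by positivity)]
  rw [hsqrt, div_div, sq]
  exact div_le_div_of_nonneg_right
    (mul_le_mul (hτY _ hm) (hτY _ hn) (by positivity) ((Nat.cast_nonneg _).trans (hτY _ hm)))
    (by positivity)

lemma one_add_log_le_mul_rpow {x ε : ℝ} (hx : 1 ≤ x) (hε : 0 < ε) :
    1 + log x ≤ (1 + 1 / ε) * x ^ ε := by
  have hlog : log x ≤ x ^ ε / ε := log_le_rpow_div (by linarith) hε
  have hone : 1 ≤ x ^ ε := one_le_rpow hx hε.le
  have : (1 + 1 / ε) * x ^ ε = x ^ ε + x ^ ε / ε := by ring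
  linarith

lemma sum_diagonal_le_mul_harmonic {C ε : ℝ} (hC : 0 ≤ C) (hε : 0 ≤ ε)
    (hτ : ∀ n : ℕ, (#n.divisors : ℝ) ≤ C * (n : ℝ) ^ ε) {a b : ℕ} (ha : 1 ≤ a) (hb : 1 ≤ b)
    {X : ℝ} (hX : 0 ≤ X) :
    ∑ p ∈ (Icc 1 ⌊X⌋₊ ×ˢ Icc 1 ⌊X⌋₊).filter
          (fun p : ℕ × ℕ => a * p.1 = b * p.2 ∧ ((p.1 * p.2 : ℕ) : ℝ) ≤ X),
        (#p.1.divisors : ℝ) * #p.2.divisors / √((p.1 : ℝ) * p.2)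
      ≤ (C * ((a : ℝ) * b * X) ^ ε) ^ 2 / √(((a / a.gcd b : ℕ) : ℝ) * ((b / a.gcd b : ℕ) : ℝ))
          * harmonic ⌊X⌋₊ := by
  set a' := a / a.gcd b
  set b' := b / a.gcd b
  have hbound : ∀ c k : ℕ, c ≤ a * b → k ∈ Icc 1 ⌊X⌋₊ → ((c * k : ℕ) : ℝ) ≤ a * b * X := by
    intro c k hc hk
    have hkX : (k : ℝ) ≤ X := (Nat.cast_le.mpr (mem_Icc.mp hk).2).trans (Nat.floor_le hX)
    push_cast
    exact mul_le_mul (mod_cast hc) hkX (by positivity) (by positivity)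
  have ha' : a' ≤ a * b := (Nat.div_le_self _ _).trans (Nat.le_mul_of_pos_right _ hb)
  have hb' : b' ≤ a * b := (Nat.div_le_self _ _).trans (Nat.le_mul_of_pos_left _ ha)
  calc _ ≤ ∑ k ∈ Icc 1 ⌊X⌋₊, (#(b' * k).divisors : ℝ) * #(a' * k).divisors
          / √(((b' * k : ℕ) : ℝ) * ((a' * k : ℕ) : ℝ)) := by
        refine sum_le_sum_mul_div_gcd (by omega) (fun p hp => ?_) (fun p => by positivity)
        simp only [mem_filter, mem_product, mem_Icc] at hp
        exact ⟨hp.2.1, hp.1.1.1, hp.1.1.2⟩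
    _ ≤ ∑ k ∈ Icc 1 ⌊X⌋₊, (C * ((a : ℝ) * b * X) ^ ε) ^ 2 / √(b' * a') / k :=
        sum_le_sum fun k hk => card_divisors_mul_card_divisors_div_sqrt_le hC hε hτ
          (hbound _ _ hb' hk) (hbound _ _ ha' hk)
    _ = _ := by
        rw [mul_comm (b' : ℝ)]
        simp [harmonic_eq_sum_Icc, mul_sum, div_eq_mul_inv]

/-- Bound for the diagonal `am = bn` error term in the mollified second
moment. -/
theorem stmt_15 :
    ∀ δ > (0:ℝ), ∃ C > (0:ℝ), ∀ a b : ℕ, 1 ≤ a → 1 ≤ b → ∀ X : ℝ, 2 ≤ X →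
      ∑ p ∈ (Finset.Icc 1 ⌊X⌋₊ ×ˢ Finset.Icc 1 ⌊X⌋₊).filter
          (fun p : ℕ × ℕ => a * p.1 = b * p.2 ∧ ((p.1 * p.2 : ℕ) : ℝ) ≤ X),
          ((Nat.divisors p.1).card : ℝ) * ((Nat.divisors p.2).card : ℝ)
            / Real.sqrt ((p.1 : ℝ) * (p.2 : ℝ))
        ≤ C * ((a : ℝ) * (b : ℝ) * X) ^ δ
            / Real.sqrt (((a / Nat.gcd a b : ℕ) : ℝ) * ((b / Nat.gcd a b : ℕ) : ℝ)) := by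
  intro δ hδ
  obtain ⟨C, hC, hτ⟩ := exists_card_divisors_le_mul_rpow (by positivity : 0 < δ / 4)
  refine ⟨C ^ 2 * (1 + 1 / (δ / 2)), by positivity, fun a b ha hb X hX => ?_⟩
  set Y := (a : ℝ) * b * X
  have hXY : X ≤ Y :=
    le_mul_of_one_le_left (by linarith) (one_le_mul_of_one_le_of_one_le (mod_cast ha) (mod_cast hb))
  have hY : 0 < Y := by linarith
  have hharmonic : (harmonic ⌊X⌋₊ : ℝ) ≤ (1 + 1 / (δ / 2)) * Y ^ (δ / 2) :=
    calc _ ≤ 1 + log X := harmonic_floor_le_one_add_log X (by linarith)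
      _ ≤ 1 + log Y := by gcongr
      _ ≤ _ := one_add_log_le_mul_rpow (by linarith) (by positivity)
  have hYδ : (Y ^ (δ / 4)) ^ 2 * Y ^ (δ / 2) = Y ^ δ := by
    rw [← rpow_natCast, ← rpow_mul hY.le, ← rpow_add hY]
    ring_nf
  calc _ ≤ (C * Y ^ (δ / 4)) ^ 2 / √(((a / a.gcd b : ℕ) : ℝ) * ((b / a.gcd b : ℕ) : ℝ))
          * harmonic ⌊X⌋₊ :=
        sum_diagonal_le_mul_harmonic hC.le (by positivity) hτ ha hb (by linarith)
    _ ≤ (C * Y ^ (δ / 4)) ^ 2 / √(((a / a.gcd b : ℕ) : ℝ) * ((b / a.gcd b : ℕ) : ℝ))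
          * ((1 + 1 / (δ / 2)) * Y ^ (δ / 2)) := by gcongr
    _ = _ := by rw [← hYδ]; ring
end
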